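/- Let A and B be symmetric linear operators in a real or complex Hilbert space H. Assume that A is essentially selfadjoint, that B is A-bounded, and that there exists b > 0 such that ‖B x‖² ≤ ‖A x‖² + ‖(A+B) x‖² + b²‖x‖² for all x ∈ dom A. Then A + B (with domain dom A ∩ dom B = dom A) is essentially selfadjoint. -/

import Mathlib

open LinearPMap

/-- A partially defined operator `A` in a Hilbert space is symmetric if
`⟪A x, y⟫ = ⟪x, A y⟫` for all `x, y` in its domain. -/
def LinearPMap.IsSymmetricOp {𝕜 H : Type*} [RCLike 𝕜] [NormedAddCommGroup H]
    [InnerProductSpace 𝕜 H] (A : H →ₗ.[𝕜] H) : Prop :=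
  ∀ x y : A.domain, inner (𝕜 := 𝕜) (A x) (y : H) = inner (𝕜 := 𝕜) (x : H) (A y)

/-- A partially defined operator `A` in a Hilbert space is selfadjoint if it is densely
defined and `A* = A`. -/
def LinearPMap.IsSelfAdjointOp {𝕜 H : Type*} [RCLike 𝕜] [NormedAddCommGroup H]
    [InnerProductSpace 𝕜 H] [CompleteSpace H] (A : H →ₗ.[𝕜] H) : Prop :=
  Dense (A.domain : Set H) ∧ A.adjoint = A

/-- An operator `A` in a Hilbert space is essentially selfadjoint if it is closable and its
closure is a densely defined selfadjoint operator. -/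
def LinearPMap.IsEssSelfAdjointOp {𝕜 H : Type*} [RCLike 𝕜] [NormedAddCommGroup H]
    [InnerProductSpace 𝕜 H] [CompleteSpace H] (A : H →ₗ.[𝕜] H) : Prop :=
  A.IsClosable ∧ Dense (A.closure.domain : Set H) ∧ A.closure.adjoint = A.closure

/-!
Identify `H × H` with a complexification of `H`, on which `T - i s` acts as
`(u, v) ↦ (T u + s v, T v - s u)`. For symmetric `T` this satisfies
`‖(T - i s) w‖² = ‖T w‖² + s² ‖w‖²`, so for closed `T` its range is closed, and a
symmetric `T` with `T - i b` onto and `T + i b` of dense range is selfadjoint.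

Expanding `‖(A + B) x‖²`, the hypothesis on `b` says `Re ⟪(A + B) x, A x⟫ ≥ -(b²/2) ‖x‖²`.
Let `s = ± b` and `g ⊥ ran (A + B - i s)`. Since `Ā` is selfadjoint, `g = (Ā - i s) w`;
approximate `w` by `w_n ∈ dom A` in the graph norm of `A`. As `(A + B - i s) w_n` stays bounded
(`B` is `A`-bounded) and `(A - i s) w_n → g`, the real part of
`⟪(A + B - i s) w_n, (A - i s) w_n⟫` tends to `0`, while it is at least `(s² - b²/2) ‖w_n‖²`.
Hence `w = 0` and `g = 0`: both ranges are dense, and the closure of `A + B` is selfadjoint.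
-/

open Filter Topology RCLike WithLp
open scoped InnerProductSpace

theorem CauchySeq.of_dist_le_mul {X Y : Type*} [PseudoMetricSpace X] [PseudoMetricSpace Y]
    {f : ℕ → X} {g : ℕ → Y} (hf : CauchySeq f) (C : ℝ)
    (h : ∀ m n, dist (g m) (g n) ≤ C * dist (f m) (f n)) : CauchySeq g := by
  rw [cauchySeq_iff_tendsto_dist_atTop_0] at hf ⊢
  exact squeeze_zero (fun _ => dist_nonneg) (fun p => h p.1 p.2) (by simpa using hf.const_mul C)

theorem Real.le_sqrt_mul_add_sqrt_mul_of_sq_le {t x y α β : ℝ} (hα : 0 ≤ α) (hβ : 0 ≤ β)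
    (hx : 0 ≤ x) (hy : 0 ≤ y) (h : t ^ 2 ≤ α * x ^ 2 + β * y ^ 2) :
    t ≤ √α * x + √β * y := by
  have h' : t ^ 2 ≤ (√α * x + √β * y) ^ 2 :=
    calc t ^ 2 ≤ (√α * x) ^ 2 + (√β * y) ^ 2 := by
          rwa [mul_pow, mul_pow, Real.sq_sqrt hα, Real.sq_sqrt hβ]
      _ ≤ (√α * x + √β * y) ^ 2 := by
          nlinarith [mul_nonneg (mul_nonneg (Real.sqrt_nonneg α) hx)
            (mul_nonneg (Real.sqrt_nonneg β) hy)]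
  exact (abs_le_of_sq_le_sq' h' (by positivity)).2

theorem norm_add_le_of_norm_sq_le {E : Type*} [SeminormedAddCommGroup E] {a b x : E}
    {α β : ℝ} (hα : 0 ≤ α) (hβ : 0 ≤ β) (h : ‖b‖ ^ 2 ≤ α * ‖a‖ ^ 2 + β * ‖x‖ ^ 2) :
    ‖a + b‖ ≤ (1 + √α) * ‖a‖ + √β * ‖x‖ := by
  have hb := Real.le_sqrt_mul_add_sqrt_mul_of_sq_le hα hβ (norm_nonneg a) (norm_nonneg x) h
  linarith [norm_add_le a b]

section InnerProduct

variable {𝕜 E : Type*} [RCLike 𝕜] [NormedAddCommGroup E] [InnerProductSpace 𝕜 E]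

theorem neg_half_mul_le_re_inner_add_of_norm_sq_le {a b x : E} {c : ℝ}
    (h : ‖b‖ ^ 2 ≤ ‖a‖ ^ 2 + ‖a + b‖ ^ 2 + c * ‖x‖ ^ 2) :
    -(c / 2) * ‖x‖ ^ 2 ≤ re ⟪a + b, a⟫_𝕜 := by
  rw [@norm_add_sq 𝕜] at h
  rw [inner_add_left, _root_.map_add, inner_self_eq_norm_sq, inner_re_symm]
  linarith

theorem re_inner_toLp_add_smul_sub_smul (s : ℝ) {p q p' q' x y : E}
    (h : re ⟪p, y⟫_𝕜 = re ⟪x, q⟫_𝕜) (h' : re ⟪p', y⟫_𝕜 = re ⟪x, q'⟫_𝕜) :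
    re ⟪toLp 2 (p + (s : 𝕜) • y, q - (s : 𝕜) • x),
        toLp 2 (p' + (s : 𝕜) • y, q' - (s : 𝕜) • x)⟫_𝕜 =
      re ⟪p, p'⟫_𝕜 + re ⟪q, q'⟫_𝕜 + s ^ 2 * (‖x‖ ^ 2 + ‖y‖ ^ 2) := by
  simp only [prod_inner_apply, inner_add_left, inner_add_right, inner_sub_left,
    inner_sub_right, inner_smul_left, inner_smul_right, conj_ofReal, _root_.map_add,
    _root_.map_sub, re_ofReal_mul, inner_self_eq_norm_sq]
  rw [inner_re_symm (𝕜 := 𝕜) y p', inner_re_symm (𝕜 := 𝕜) q x]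
  linear_combination s * h + s * h'

theorem tendsto_inner_zero_of_norm_le {p q : ℕ → E} {g : E} {M : ℝ} (hq : ∀ n, ‖q n‖ ≤ M)
    (hp : Tendsto p atTop (𝓝 g)) (hqg : ∀ n, ⟪q n, g⟫_𝕜 = 0) :
    Tendsto (fun n => ⟪q n, p n⟫_𝕜) atTop (𝓝 0) := by
  refine squeeze_zero_norm (fun n => ?_)
    (by simpa using (tendsto_iff_norm_sub_tendsto_zero.mp hp).const_mul M)
  calc ‖⟪q n, p n⟫_𝕜‖ = ‖⟪q n, p n - g⟫_𝕜‖ := by rw [inner_sub_right, hqg, sub_zero]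
    _ ≤ ‖q n‖ * ‖p n - g‖ := norm_inner_le_norm _ _
    _ ≤ M * ‖p n - g‖ := by gcongr; exact hq n

end InnerProduct

namespace LinearPMap

variable {𝕜 H : Type*} [RCLike 𝕜] [NormedAddCommGroup H] [InnerProductSpace 𝕜 H]

section Symmetric

variable {T : H →ₗ.[𝕜] H}

theorem IsSymmetricOp.add {S : H →ₗ.[𝕜] H} (hT : T.IsSymmetricOp) (hS : S.IsSymmetricOp) :
    (T + S).IsSymmetricOp := fun x y => by
  simp only [add_apply, inner_add_left, inner_add_right]
  exact congrArg₂ (· + ·) (hT ⟨x, x.2.1⟩ ⟨y, y.2.1⟩) (hS ⟨x, x.2.2⟩ ⟨y, y.2.2⟩)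

theorem IsClosable.exists_seq_tendsto (hT : T.IsClosable) (x : T.closure.domain) :
    ∃ f : ℕ → T.domain, Tendsto (fun n => (f n : H)) atTop (𝓝 x) ∧
      Tendsto (fun n => T (f n)) atTop (𝓝 (T.closure x)) := by
  have hx : ((x : H), T.closure x) ∈ _root_.closure (T.graph : Set (H × H)) := by
    rw [← Submodule.topologicalClosure_coe, hT.graph_closure_eq_closure_graph]
    exact T.closure.mem_graph x
  obtain ⟨g, hg, hgx⟩ := mem_closure_iff_seq_limit.mp hx
  choose f hf using fun n => T.mem_graph_iff.mp (hg n)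
  refine ⟨f, ?_, ?_⟩
  · exact ((continuous_fst.tendsto _).comp hgx).congr fun n => (hf n).1.symm
  · exact ((continuous_snd.tendsto _).comp hgx).congr fun n => (hf n).2.symm

theorem IsClosable.dense_domain_of_closure (hT : T.IsClosable)
    (hd : Dense (T.closure.domain : Set H)) : Dense (T.domain : Set H) :=
  dense_closure.mp <| hd.mono fun x hx => by
    obtain ⟨f, hf, -⟩ := hT.exists_seq_tendsto ⟨x, hx⟩
    exact mem_closure_of_tendsto hf (Eventually.of_forall fun n => (f n).2)

theorem IsSymmetricOp.closure (h : T.IsSymmetricOp) (hT : T.IsClosable) :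
    T.closure.IsSymmetricOp := fun x y => by
  obtain ⟨f, hfx, hTfx⟩ := hT.exists_seq_tendsto x
  obtain ⟨g, hgy, hTgy⟩ := hT.exists_seq_tendsto y
  exact tendsto_nhds_unique (hTfx.inner hgy) <| (hfx.inner hTgy).congr fun n => (h _ _).symm

variable [CompleteSpace H]

theorem IsSymmetricOp.le_adjoint (h : T.IsSymmetricOp) (hd : Dense (T.domain : Set H)) :
    T ≤ T.adjoint :=
  IsFormalAdjoint.le_adjoint hd h

theorem IsSymmetricOp.isClosable (h : T.IsSymmetricOp) (hd : Dense (T.domain : Set H)) :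
    T.IsClosable :=
  (adjoint_isClosed hd).isClosable.leIsClosable (h.le_adjoint hd)

end Symmetric

/-- `T - i s` on the complexification `H × H` of `H`, in which `(u, v)` stands for `u + i v`;
working on `H × H` lets the usual `T ± i s` arguments run over `ℝ` as well as over `ℂ`. -/
noncomputable def complexShift (T : H →ₗ.[𝕜] H) (s : ℝ) :
    T.domain × T.domain →ₗ[𝕜] WithLp 2 (H × H) :=
  (WithLp.linearEquiv 2 𝕜 (H × H)).symm.toLinearMap ∘ₗ
    ((T.toFun ∘ₗ LinearMap.fst 𝕜 _ _ + (s : 𝕜) • (T.domain.subtype ∘ₗ LinearMap.snd 𝕜 _ _)).prod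
      (T.toFun ∘ₗ LinearMap.snd 𝕜 _ _ - (s : 𝕜) • (T.domain.subtype ∘ₗ LinearMap.fst 𝕜 _ _)))

section ComplexShift

variable {T : H →ₗ.[𝕜] H} (s : ℝ)

theorem complexShift_apply (u v : T.domain) :
    T.complexShift s (u, v) = toLp 2 (T u + (s : 𝕜) • (v : H), T v - (s : 𝕜) • (u : H)) :=
  rfl

theorem norm_complexShift_le (u v : T.domain) :
    ‖T.complexShift s (u, v)‖ ≤ ‖T u‖ + ‖T v‖ + |s| * (‖(u : H)‖ + ‖(v : H)‖) := by
  have hfst : ‖T u + (s : 𝕜) • (v : H)‖ ≤ ‖T u‖ + |s| * ‖(v : H)‖ := by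
    simpa only [norm_smul, norm_ofReal] using norm_add_le (T u) ((s : 𝕜) • (v : H))
  have hsnd : ‖T v - (s : 𝕜) • (u : H)‖ ≤ ‖T v‖ + |s| * ‖(u : H)‖ := by
    simpa only [norm_smul, norm_ofReal] using norm_sub_le (T v) ((s : 𝕜) • (u : H))
  refine (sq_le_sq₀ (norm_nonneg _) (by positivity)).mp ?_
  rw [complexShift_apply, prod_norm_sq_eq_of_L2, toLp_fst, toLp_snd]
  nlinarith [norm_nonneg (T u + (s : 𝕜) • (v : H)), norm_nonneg (T v - (s : 𝕜) • (u : H))]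

theorem IsSymmetricOp.norm_complexShift_sq (hT : T.IsSymmetricOp) (u v : T.domain) :
    ‖T.complexShift s (u, v)‖ ^ 2 =
      ‖T u‖ ^ 2 + ‖T v‖ ^ 2 + s ^ 2 * (‖(u : H)‖ ^ 2 + ‖(v : H)‖ ^ 2) := by
  have h : re ⟪T u, v⟫_𝕜 = re ⟪(u : H), T v⟫_𝕜 := congrArg re (hT u v)
  rw [complexShift_apply]
  simpa only [← @norm_sq_eq_re_inner 𝕜] using re_inner_toLp_add_smul_sub_smul s h h

theorem IsSymmetricOp.abs_mul_norm_le_norm_complexShift (hT : T.IsSymmetricOp)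
    (u v : T.domain) :
    |s| * ‖(u : H)‖ ≤ ‖T.complexShift s (u, v)‖ ∧ |s| * ‖(v : H)‖ ≤ ‖T.complexShift s (u, v)‖ := by
  have h := hT.norm_complexShift_sq s u v
  constructor <;> refine (sq_le_sq₀ (by positivity) (norm_nonneg _)).mp ?_ <;>
    rw [h, mul_pow, sq_abs] <;> nlinarith [norm_nonneg (T u), norm_nonneg (T v), sq_nonneg s,
      sq_nonneg ‖(u : H)‖, sq_nonneg ‖(v : H)‖]

theorem IsSymmetricOp.eq_zero_of_complexShift_eq_zero (hT : T.IsSymmetricOp) (hs : s ≠ 0)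
    {u v : T.domain} (h : T.complexShift s (u, v) = 0) : (u : H) = 0 ∧ (v : H) = 0 := by
  have hb := hT.abs_mul_norm_le_norm_complexShift s u v
  rw [h, norm_zero] at hb
  have hs' : 0 < |s| := abs_pos.mpr hs
  constructor <;> refine norm_eq_zero.mp (le_antisymm ?_ (norm_nonneg _)) <;>
    nlinarith [norm_nonneg (u : H), norm_nonneg (v : H)]

theorem complexShift_inclusion {S : H →ₗ.[𝕜] H} (h : S ≤ T) (u v : S.domain) :
    T.complexShift s (Submodule.inclusion h.1 u, Submodule.inclusion h.1 v) =
      S.complexShift s (u, v) := by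
  rw [complexShift_apply, complexShift_apply, h.2 (x := u) (y := Submodule.inclusion h.1 u) rfl,
    h.2 (x := v) (y := Submodule.inclusion h.1 v) rfl]
  rfl

theorem range_complexShift_mono {S : H →ₗ.[𝕜] H} (h : S ≤ T) :
    LinearMap.range (S.complexShift s) ≤ LinearMap.range (T.complexShift s) := by
  rintro _ ⟨⟨u, v⟩, rfl⟩
  exact ⟨_, complexShift_inclusion s h u v⟩

theorem norm_complexShift_inclusion_le {A S : H →ₗ.[𝕜] H} (hdom : A.domain ≤ S.domain)
    {a b : ℝ} (hbdd : ∀ x : A.domain, ‖S (Submodule.inclusion hdom x)‖ ≤ a * ‖A x‖ + b * ‖(x : H)‖)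
    (x y : A.domain) :
    ‖S.complexShift s (Submodule.inclusion hdom x, Submodule.inclusion hdom y)‖ ≤
      a * (‖A x‖ + ‖A y‖) + (b + |s|) * (‖(x : H)‖ + ‖(y : H)‖) := by
  have := norm_complexShift_le s (Submodule.inclusion hdom x) (Submodule.inclusion hdom y)
  simp only [Submodule.coe_inclusion] at this
  linarith [hbdd x, hbdd y]

theorem re_inner_complexShift_inclusion_ge {A S : H →ₗ.[𝕜] H} (hAsymm : A.IsSymmetricOp)
    (hS : S.IsSymmetricOp) (hdom : A.domain ≤ S.domain) {c : ℝ}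
    (hlow : ∀ x : A.domain, -c * ‖(x : H)‖ ^ 2 ≤ re ⟪S (Submodule.inclusion hdom x), A x⟫_𝕜)
    (x y : A.domain) :
    (s ^ 2 - c) * (‖(x : H)‖ ^ 2 + ‖(y : H)‖ ^ 2) ≤
      re ⟪S.complexShift s (Submodule.inclusion hdom x, Submodule.inclusion hdom y),
        A.complexShift s (x, y)⟫_𝕜 := by
  have h := re_inner_toLp_add_smul_sub_smul s (x := (x : H)) (y := (y : H))
    (congrArg re (hS (Submodule.inclusion hdom x) (Submodule.inclusion hdom y)))
    (congrArg re (hAsymm x y))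
  refine le_of_le_of_eq ?_ h.symm
  linarith [hlow x, hlow y]

variable [CompleteSpace H]

theorem IsSymmetricOp.isClosed_range_complexShift (hsymm : T.IsSymmetricOp) (hT : T.IsClosed)
    (hs : s ≠ 0) :
    _root_.IsClosed (LinearMap.range (T.complexShift s) : Set (WithLp 2 (H × H))) := by
  refine isClosed_of_closure_subset fun z hz => ?_
  obtain ⟨f, hf, hfz⟩ := mem_closure_iff_seq_limit.mp hz
  choose w hw using hf
  have hdist (m n : ℕ) : dist ((w m).1 : H) (w n).1 ≤ |s|⁻¹ * dist (f m) (f n) ∧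
      dist ((w m).2 : H) (w n).2 ≤ |s|⁻¹ * dist (f m) (f n) := by
    have h := hsymm.abs_mul_norm_le_norm_complexShift s (w m - w n).1 (w m - w n).2
    rw [_root_.map_sub, hw, hw] at h
    simp only [dist_eq_norm, ← Submodule.coe_sub, ← Prod.fst_sub, ← Prod.snd_sub]
    constructor <;> rw [le_inv_mul_iff₀ (abs_pos.mpr hs)]
    exacts [h.1, h.2]
  obtain ⟨a, ha⟩ := cauchySeq_tendsto_of_complete <|
    hfz.cauchySeq.of_dist_le_mul _ fun m n => (hdist m n).1
  obtain ⟨c, hc⟩ := cauchySeq_tendsto_of_complete <|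
    hfz.cauchySeq.of_dist_le_mul _ fun m n => (hdist m n).2
  have hTu : Tendsto (fun n => T (w n).1) atTop (𝓝 (z.fst - (s : 𝕜) • c)) :=
    ((((fstL 2 𝕜 H H).continuous.tendsto z).comp hfz).sub (hc.const_smul _)).congr fun n =>
      (eq_sub_of_add_eq (congrArg WithLp.fst (hw n))).symm
  have hTv : Tendsto (fun n => T (w n).2) atTop (𝓝 (z.snd + (s : 𝕜) • a)) :=
    ((((sndL 2 𝕜 H H).continuous.tendsto z).comp hfz).add (ha.const_smul _)).congr fun n =>
      (eq_add_of_sub_eq (congrArg WithLp.snd (hw n))).symm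
  obtain ⟨u, hu, hTu⟩ := T.mem_graph_iff.mp <|
    hT.mem_of_tendsto (ha.prodMk_nhds hTu) (Eventually.of_forall fun n => T.mem_graph _)
  obtain ⟨v, hv, hTv⟩ := T.mem_graph_iff.mp <|
    hT.mem_of_tendsto (hc.prodMk_nhds hTv) (Eventually.of_forall fun n => T.mem_graph _)
  refine ⟨(u, v), ?_⟩
  rw [complexShift_apply, hTu, hTv, hu, hv, sub_add_cancel, add_sub_cancel_right]
  rfl

theorem IsSymmetricOp.range_complexShift_eq_top (hsymm : T.IsSymmetricOp) (hT : T.IsClosed)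
    (hs : s ≠ 0) (hd : Dense (LinearMap.range (T.complexShift s) : Set (WithLp 2 (H × H)))) :
    LinearMap.range (T.complexShift s) = ⊤ := by
  rw [← (hsymm.isClosed_range_complexShift s hT hs).submodule_topologicalClosure_eq,
    ← Submodule.dense_iff_topologicalClosure_eq_top]
  exact hd

theorem inner_complexShift_adjoint (hd : Dense (T.domain : Set H)) (u v : T.domain)
    (y z : T.adjoint.domain) :
    ⟪T.complexShift s (u, v), toLp 2 ((y : H), (z : H))⟫_𝕜 =
      ⟪toLp 2 ((u : H), (v : H)), T.adjoint.complexShift (-s) (y, z)⟫_𝕜 := by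
  have h := (adjoint_isFormalAdjoint hd).symm
  simp only [complexShift_apply, prod_inner_apply, inner_add_left, inner_add_right,
    inner_sub_left, inner_sub_right, inner_smul_left, inner_smul_right, conj_ofReal, h u y,
    h v z, ofReal_neg]
  ring

theorem exists_adjoint_complexShift_eq_zero_of_mem_orthogonal (hd : Dense (T.domain : Set H))
    {g : WithLp 2 (H × H)} (hg : g ∈ (LinearMap.range (T.complexShift s))ᗮ) :
    ∃ y z : T.adjoint.domain,
      toLp 2 ((y : H), (z : H)) = g ∧ T.adjoint.complexShift (-s) (y, z) = 0 := by
  have hg' (u v : T.domain) : ⟪g, T.complexShift s (u, v)⟫_𝕜 = 0 := by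
    rw [← inner_conj_symm, (Submodule.mem_orthogonal _ _).mp hg _ ⟨(u, v), rfl⟩, _root_.map_zero]
  have hy (u : T.domain) : ⟪(s : 𝕜) • g.snd, (u : H)⟫_𝕜 = ⟪g.fst, T u⟫_𝕜 := by
    have := hg' u 0
    simp only [complexShift_apply, prod_inner_apply, ofLp_fst, ofLp_snd, ZeroMemClass.coe_zero,
      map_zero, smul_zero, add_zero, zero_sub, inner_neg_right, inner_smul_left,
      inner_smul_right, conj_ofReal] at this ⊢
    linear_combination -this
  have hz (v : T.domain) : ⟪-((s : 𝕜) • g.fst), (v : H)⟫_𝕜 = ⟪g.snd, T v⟫_𝕜 := by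
    have := hg' 0 v
    simp only [complexShift_apply, prod_inner_apply, ofLp_fst, ofLp_snd, ZeroMemClass.coe_zero,
      map_zero, smul_zero, zero_add, sub_zero, inner_neg_left, inner_smul_left,
      inner_smul_right, conj_ofReal] at this ⊢
    linear_combination -this
  refine ⟨⟨g.fst, mem_adjoint_domain_of_exists _ ⟨_, hy⟩⟩,
    ⟨g.snd, mem_adjoint_domain_of_exists _ ⟨_, hz⟩⟩, rfl, ?_⟩
  rw [complexShift_apply, adjoint_apply_eq hd _ hy, adjoint_apply_eq hd _ hz]
  simp

theorem dense_range_complexShift_of_isSymmetricOp_adjoint (hd : Dense (T.domain : Set H))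
    (hsymm : T.adjoint.IsSymmetricOp) (hs : s ≠ 0) :
    Dense (LinearMap.range (T.complexShift s) : Set (WithLp 2 (H × H))) := by
  rw [Submodule.dense_iff_topologicalClosure_eq_top, Submodule.topologicalClosure_eq_top_iff,
    Submodule.eq_bot_iff]
  intro g hg
  obtain ⟨y, z, rfl, hyz⟩ := exists_adjoint_complexShift_eq_zero_of_mem_orthogonal s hd hg
  obtain ⟨hy, hz⟩ := hsymm.eq_zero_of_complexShift_eq_zero (-s) (neg_ne_zero.mpr hs) hyz
  rw [hy, hz]
  rfl

theorem IsSymmetricOp.adjoint_eq_self (hsymm : T.IsSymmetricOp) (hd : Dense (T.domain : Set H))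
    (htop : LinearMap.range (T.complexShift s) = ⊤)
    (hdense : Dense (LinearMap.range (T.complexShift (-s)) : Set (WithLp 2 (H × H)))) :
    T.adjoint = T := by
  have hle := hsymm.le_adjoint hd
  refine (eq_of_le_of_domain_eq hle (le_antisymm hle.1 fun y hy => ?_)).symm
  set ι := Submodule.inclusion hle.1
  obtain ⟨⟨u, v⟩, huv⟩ : T.adjoint.complexShift s (⟨y, hy⟩, 0) ∈
      LinearMap.range (T.complexShift s) := htop ▸ Submodule.mem_top
  have hker : T.adjoint.complexShift s (ι u - ⟨y, hy⟩, ι v) = 0 := by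
    rw [← sub_zero (ι v), ← Prod.mk_sub_mk, _root_.map_sub, complexShift_inclusion s hle, huv,
      sub_self]
  have h0 := hdense.eq_zero_of_inner_right 𝕜
    (x := toLp 2 (((ι u - ⟨y, hy⟩ : T.adjoint.domain) : H), ((ι v : T.adjoint.domain) : H))) <| by
      rintro _ ⟨⟨p, q⟩, rfl⟩
      rw [inner_complexShift_adjoint (-s) hd, neg_neg, hker, inner_zero_right]
  have hyu : (u : H) = y := sub_eq_zero.mp (congrArg WithLp.fst h0)
  exact hyu ▸ u.2

theorem dense_range_complexShift_of_re_inner_ge {A S : H →ₗ.[𝕜] H} (hA : A.IsClosable)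
    (hAsymm : A.IsSymmetricOp) (hS : S.IsSymmetricOp) (hdom : A.domain ≤ S.domain) {a b c : ℝ}
    (hbdd : ∀ x : A.domain, ‖S (Submodule.inclusion hdom x)‖ ≤ a * ‖A x‖ + b * ‖(x : H)‖)
    (hlow : ∀ x : A.domain, -c * ‖(x : H)‖ ^ 2 ≤ re ⟪S (Submodule.inclusion hdom x), A x⟫_𝕜)
    (hc : c < s ^ 2) (hsurj : LinearMap.range (A.closure.complexShift s) = ⊤) :
    Dense (LinearMap.range (S.complexShift s) : Set (WithLp 2 (H × H))) := by
  rw [Submodule.dense_iff_topologicalClosure_eq_top, Submodule.topologicalClosure_eq_top_iff,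
    Submodule.eq_bot_iff]
  intro g hg
  obtain ⟨⟨u, v⟩, rfl⟩ : g ∈ LinearMap.range (A.closure.complexShift s) :=
    hsurj ▸ Submodule.mem_top
  obtain ⟨x, hx, hAx⟩ := hA.exists_seq_tendsto u
  obtain ⟨y, hy, hAy⟩ := hA.exists_seq_tendsto v
  have hp : Tendsto (fun n => A.complexShift s (x n, y n)) atTop
      (𝓝 (A.closure.complexShift s (u, v))) :=
    ((prod_continuous_toLp 2 H H).tendsto _).comp
      ((hAx.add (hy.const_smul _)).prodMk_nhds (hAy.sub (hx.const_smul _)))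
  obtain ⟨M, hM⟩ := (((hAx.norm.add hAy.norm).const_mul a).add
    ((hx.norm.add hy.norm).const_mul (b + |s|))).bddAbove_range
  have hqp := tendsto_inner_zero_of_norm_le
    (fun n => (norm_complexShift_inclusion_le s hdom hbdd (x n) (y n)).trans (hM ⟨n, rfl⟩)) hp
    fun n => (Submodule.mem_orthogonal _ _).mp hg _ ⟨_, rfl⟩
  have hlim : (s ^ 2 - c) * (‖(u : H)‖ ^ 2 + ‖(v : H)‖ ^ 2) ≤ 0 :=
    le_of_tendsto_of_tendsto' (((hx.norm.pow 2).add (hy.norm.pow 2)).const_mul _)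
      (by simpa only [_root_.map_zero, Function.comp_def] using
        (continuous_re.tendsto _).comp hqp)
      fun n => re_inner_complexShift_inclusion_ge s hAsymm hS hdom hlow (x n) (y n)
  have hnorm := nonpos_of_mul_nonpos_right hlim (sub_pos.mpr hc)
  have hu : u = 0 := Subtype.ext <| norm_eq_zero.mp <| by
    nlinarith [norm_nonneg (u : H), norm_nonneg (v : H)]
  have hv : v = 0 := Subtype.ext <| norm_eq_zero.mp <| by
    nlinarith [norm_nonneg (u : H), norm_nonneg (v : H)]
  rw [hu, hv, ← Prod.zero_eq_mk, _root_.map_zero]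

end ComplexShift

end LinearPMap

/-- **Theorem 6 (perturbation).** Let `A, B` be symmetric operators in a Hilbert space `H`.
If `A` is essentially selfadjoint, `B` is `A`-bounded, and
`‖B x‖² ≤ ‖A x‖² + ‖(A+B) x‖² + b²‖x‖²` on `dom A` for some `b > 0`, then `A + B`
(defined on `dom A ∩ dom B = dom A`) is essentially selfadjoint. -/
theorem essentially_selfadjoint_add {𝕜 H : Type*} [RCLike 𝕜]
    [NormedAddCommGroup H] [InnerProductSpace 𝕜 H] [CompleteSpace H]
    (A B : H →ₗ.[𝕜] H) (hAsymm : A.IsSymmetricOp) (hBsymm : B.IsSymmetricOp)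
    (hA : A.IsEssSelfAdjointOp)
    (hsub : A.domain ≤ B.domain)
    (hbdd : ∃ α β : ℝ, 0 ≤ α ∧ 0 ≤ β ∧ ∀ x : A.domain,
      ‖B ⟨x.1, hsub x.2⟩‖ ^ 2 ≤ α * ‖A x‖ ^ 2 + β * ‖(x : H)‖ ^ 2)
    (hb : ∃ b : ℝ, 0 < b ∧ ∀ x : A.domain,
      ‖B ⟨x.1, hsub x.2⟩‖ ^ 2 ≤ ‖A x‖ ^ 2 +
        ‖(A + B) ⟨x.1, Submodule.mem_inf.mpr ⟨x.2, hsub x.2⟩⟩‖ ^ 2 + b ^ 2 * ‖(x : H)‖ ^ 2) :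
    (A + B).IsEssSelfAdjointOp := by
  obtain ⟨hAcl, hAd, hAsa⟩ := hA
  obtain ⟨α, β, hα, hβ, hbdd⟩ := hbdd
  obtain ⟨b, hb0, hb⟩ := hb
  have hdom : A.domain ≤ (A + B).domain := fun x hx => Submodule.mem_inf.mpr ⟨hx, hsub hx⟩
  have hd : Dense ((A + B).domain : Set H) := (hAcl.dense_domain_of_closure hAd).mono hdom
  have hS := hAsymm.add hBsymm
  have hScl := hS.isClosable hd
  have hd' : Dense ((A + B).closure.domain : Set H) := hd.mono (le_closure _).1
  have hAbar := hAsymm.closure hAcl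
  have hdense (s : ℝ) (hs : s ^ 2 = b ^ 2) :
      Dense (LinearMap.range ((A + B).closure.complexShift s) : Set (WithLp 2 (H × H))) := by
    have hs0 : s ≠ 0 := by rintro rfl; nlinarith
    have hsurj := hAbar.range_complexShift_eq_top s hAcl.closure_isClosed hs0
      (dense_range_complexShift_of_isSymmetricOp_adjoint s hAd (by rwa [hAsa]) hs0)
    exact (dense_range_complexShift_of_re_inner_ge s hAcl hAsymm hS hdom (c := b ^ 2 / 2)
      (fun x => norm_add_le_of_norm_sq_le hα hβ (hbdd x))
      (fun x => neg_half_mul_le_re_inner_add_of_norm_sq_le (𝕜 := 𝕜) (a := A x)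
        (b := B ⟨x, hsub x.2⟩) (hb x))
      (by nlinarith) hsurj).mono (range_complexShift_mono s (le_closure _))
  have hSbar := hS.closure hScl
  exact ⟨hScl, hd', hSbar.adjoint_eq_self b hd' (hSbar.range_complexShift_eq_top b
    hScl.closure_isClosed hb0.ne' (hdense b rfl)) (hdense (-b) (neg_sq b))⟩
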